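/- arXiv:2605.24740 — 2 statements merged into one kernel-verified Lean document; each statement's English description precedes it below -/
import Mathlib

section
/- Let n be a positive natural number, let A be an n × n matrix with rational entries, and let d : {1,…,n} → ℕ be such that d_i ≥ 1 and (d_i : ℚ) · A_{i,j} is an integer for all i, j (so d_i clears the denominators of row i). Assume moreover that every row of A has ℓ¹-norm at most 1, i.e. ∑_{j} |A_{i,j}| ≤ 1 for each i. Then (∏_{i} d_i) · det(I − A) is an integer, and its absolute value is at most ∏_{i} (2 d_i). -/
/-!
Scaling row `i` of `1 - A` by `d i` gives an integer matrix, whose determinant is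
`(∏ i, d i) * det (1 - A)`. For the bound, expanding the determinant over permutations gives
`|det M| ≤ ∏ i, ∑ j, |M i j|`, and each row of `1 - A` has ℓ¹-norm at most `2`.
-/

open Finset

namespace Matrix

variable {n : Type*} [Fintype n] [DecidableEq n]

section AbsoluteValue

variable {R S : Type*} [CommRing R] [Nontrivial R] [CommRing S] [LinearOrder S]
  [IsStrictOrderedRing S] (abv : AbsoluteValue R S)

theorem abv_det_le_prod_sum_col (A : Matrix n n R) :
    abv A.det ≤ ∏ j, ∑ i, abv (A i j) :=
  calc
    abv A.det ≤ ∑ σ : Equiv.Perm n, abv (Equiv.Perm.sign σ • ∏ j, A (σ j) j) := by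
      rw [det_apply]; exact abv.sum_le _ _
    _ = ∑ σ : Equiv.Perm n, ∏ j, abv (A (σ j) j) :=
      sum_congr rfl fun σ _ => by rw [abv.map_units_int_smul, abv.map_prod]
    _ ≤ ∑ f : n → n, ∏ j, abv (A (f j) j) := by
      rw [← sum_image (f := fun f : n → n => ∏ j, abv (A (f j) j))
        fun σ _ τ _ h => DFunLike.coe_injective (F := Equiv.Perm n) h]
      exact sum_le_sum_of_subset_of_nonneg (subset_univ _) fun _ _ _ =>
        prod_nonneg fun _ _ => abv.nonneg _
    _ = ∏ j, ∑ i, abv (A i j) := (Fintype.prod_sum fun j i => abv (A i j)).symm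

theorem abv_det_le_prod_sum_row (A : Matrix n n R) :
    abv A.det ≤ ∏ i, ∑ j, abv (A i j) := by
  simpa only [det_transpose, transpose_apply] using abv_det_le_prod_sum_col abv Aᵀ

end AbsoluteValue

theorem exists_prod_mul_det_eq_algebraMap {R K : Type*} [CommRing R] [CommRing K] [Algebra R K]
    (A : Matrix n n K) (d : n → K) (hden : ∀ i j, ∃ z : R, d i * A i j = algebraMap R K z) :
    ∃ z : R, (∏ i, d i) * A.det = algebraMap R K z := by
  choose z hz using hden
  refine ⟨(of z).det, ?_⟩
  have hscaled : diagonal d * A = (of z).map (algebraMap R K) := by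
    ext i j; simp [hz]
  rw [← det_diagonal, ← det_mul, hscaled, RingHom.map_det, RingHom.mapMatrix_apply]

theorem sum_abs_one_sub_apply_le {K : Type*} [Ring K] [LinearOrder K] [IsOrderedRing K]
    (A : Matrix n n K) (i : n) :
    ∑ j, |(1 - A) i j| ≤ 1 + ∑ j, |A i j| :=
  calc
    ∑ j, |(1 - A) i j| ≤ ∑ j, (|(1 : Matrix n n K) i j| + |A i j|) :=
      sum_le_sum fun j _ => abs_sub _ _
    _ = 1 + ∑ j, |A i j| := by simp [sum_add_distrib, one_apply, apply_ite (abs : K → K)]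

end Matrix

theorem prod_den_mul_det_one_sub_isInt_and_bounded_general (n : ℕ)
    (A : Matrix (Fin n) (Fin n) ℚ) (d : Fin n → ℕ)
    (hden : ∀ i j, ∃ z : ℤ, (d i : ℚ) * A i j = z)
    (hrow : ∀ i : Fin n, ∑ j : Fin n, |A i j| ≤ 1) :
    (∃ z : ℤ, (∏ i : Fin n, (d i : ℚ)) * ((1 : Matrix (Fin n) (Fin n) ℚ) - A).det = z) ∧
      |(∏ i : Fin n, (d i : ℚ)) * ((1 : Matrix (Fin n) (Fin n) ℚ) - A).det|
        ≤ ∏ i : Fin n, (2 * d i : ℚ) := by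
  refine ⟨Matrix.exists_prod_mul_det_eq_algebraMap _ _ fun i j => ?_, ?_⟩
  · obtain ⟨z, hz⟩ := hden i j
    refine ⟨d i * (if i = j then 1 else 0) - z, ?_⟩
    simp [Matrix.one_apply, mul_sub, hz]
  · have hdet : |(1 - A).det| ≤ ∏ _i : Fin n, (2 : ℚ) :=
      (Matrix.abv_det_le_prod_sum_row AbsoluteValue.abs _).trans <|
        prod_le_prod (fun _ _ => sum_nonneg fun _ _ => abs_nonneg _) fun i _ =>
          (Matrix.sum_abs_one_sub_apply_le A i).trans (by linarith [hrow i])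
    calc |(∏ i, (d i : ℚ)) * (1 - A).det|
        = (∏ i, (d i : ℚ)) * |(1 - A).det| := by rw [abs_mul, abs_of_nonneg (by positivity)]
      _ ≤ (∏ i, (d i : ℚ)) * ∏ _i : Fin n, (2 : ℚ) := by gcongr
      _ = ∏ i, (2 * d i : ℚ) := by rw [← prod_mul_distrib]; simp only [mul_comm]

/-- If `d i` clears the denominators of row `i` of the rational matrix `A`, with
`d i ≥ 1`, and every row of `A` has ℓ¹-norm at most 1, then
`(∏ i, d i) * det (I - A)` is an integer of absolute value at most `∏ i, 2 * d i`. -/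
theorem prod_den_mul_det_one_sub_isInt_and_bounded (n : ℕ) (hn : 0 < n)
    (A : Matrix (Fin n) (Fin n) ℚ) (d : Fin n → ℕ)
    (hd : ∀ i, 1 ≤ d i)
    (hden : ∀ i j, ∃ z : ℤ, (d i : ℚ) * A i j = z)
    (hrow : ∀ i : Fin n, ∑ j : Fin n, |A i j| ≤ 1) :
    (∃ z : ℤ, (∏ i : Fin n, (d i : ℚ)) * ((1 : Matrix (Fin n) (Fin n) ℚ) - A).det = z) ∧
      |(∏ i : Fin n, (d i : ℚ)) * ((1 : Matrix (Fin n) (Fin n) ℚ) - A).det|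
        ≤ ∏ i : Fin n, (2 * d i : ℚ) :=
  prod_den_mul_det_one_sub_isInt_and_bounded_general n A d hden hrow
end

section
/- Let n be a positive natural number and let d : {1,…,n} → ℕ satisfy d_i ≥ 1 for all i. Let A and A' be n × n matrices with rational entries such that: (i) (d_i : ℚ) · A_{i,j} ∈ ℤ and (d_i : ℚ) · A'_{i,j} ∈ ℤ for all i, j; (ii) every row of A and every row of A' has ℓ¹-norm at most 1; and (iii) both I − A and I − A' are invertible. Let r ∈ ℚ^n have integer entries, and let v and v' be the unique row vectors with v · (I − A) = r and v' · (I − A') = r. Then either ∑_{i} |v_i − v'_i| = 0 or ∑_{i} |v_i − v'_i| ≥ ∏_{i} (2 d_i)^{-2}. -/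
open Finset Matrix

lemma abs_det_le_prod_rowsum {n : ℕ} (M : Matrix (Fin n) (Fin n) ℚ) :
    |M.det| ≤ ∏ i, ∑ j, |M i j| := by
  have h1 : |M.det| ≤ ∑ σ : Equiv.Perm (Fin n), ∏ i, |M i (σ i)| := by
    rw [Matrix.det_apply]
    refine le_trans (Finset.abs_sum_le_sum_abs _ _) (le_of_eq ?_)
    refine Finset.sum_nbij' (fun σ => σ⁻¹) (fun σ => σ⁻¹) (by simp) (by simp) (by simp)
      (by simp) ?_
    intro σ _
    have habs : |Equiv.Perm.sign σ • ∏ i, M (σ i) i| = ∏ i, |M (σ i) i| := by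
      rcases Int.units_eq_one_or (Equiv.Perm.sign σ) with h | h <;>
        simp [h, abs_prod]
    rw [habs]
    rw [← Equiv.prod_comp σ⁻¹ (fun i => |M (σ i) i|)]
    simp
  refine h1.trans ?_
  have h2 : ∑ σ : Equiv.Perm (Fin n), ∏ i, |M i (σ i)|
      ≤ ∑ f : Fin n → Fin n, ∏ i, |M i (f i)| :=
    calc ∑ σ : Equiv.Perm (Fin n), ∏ i, |M i (σ i)|
        = ∑ f ∈ Finset.univ.image (fun σ : Equiv.Perm (Fin n) => (σ : Fin n → Fin n)),
            ∏ i, |M i (f i)| :=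
          by rw [Finset.sum_image]; intro x _ y _ h; exact Equiv.ext fun a => congrFun h a
      _ ≤ ∑ f : Fin n → Fin n, ∏ i, |M i (f i)| :=
          Finset.sum_le_sum_of_subset_of_nonneg (Finset.subset_univ _)
            (fun f _ _ => Finset.prod_nonneg fun i _ => abs_nonneg _)
  refine h2.trans (le_of_eq ?_)
  rw [Finset.prod_univ_sum, ← Fintype.piFinset_univ]

lemma solve_int {n : ℕ} (d : Fin n → ℕ) (hd : ∀ i, 1 ≤ d i)
    (A : Matrix (Fin n) (Fin n) ℚ)
    (hden : ∀ i j, ∃ z : ℤ, (d i : ℚ) * A i j = z)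
    (hrow : ∀ i : Fin n, ∑ j : Fin n, |A i j| ≤ 1)
    (hinv : IsUnit ((1 : Matrix (Fin n) (Fin n) ℚ) - A))
    (r : Fin n → ℚ) (hr : ∀ i, ∃ z : ℤ, r i = z)
    (v : Fin n → ℚ)
    (hv : Matrix.vecMul v ((1 : Matrix (Fin n) (Fin n) ℚ) - A) = r) :
    ∃ (Δ : ℤ) (z : Fin n → ℤ), Δ ≠ 0 ∧ ((|Δ| : ℤ) : ℚ) ≤ ∏ i, (2 * d i : ℚ) ∧
      ∀ i, (Δ : ℚ) * v i = d i * z i := by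
  classical
  have hdQ : ∀ i, (d i : ℚ) ≠ 0 := fun i =>
    Nat.cast_ne_zero.mpr (Nat.one_le_iff_ne_zero.mp (hd i))
  set B : Matrix (Fin n) (Fin n) ℤ :=
    Matrix.of (fun i j => (d i : ℤ) * (if i = j then 1 else 0) - Classical.choose (hden i j))
    with hB
  set M : Matrix (Fin n) (Fin n) ℚ :=
    Matrix.diagonal (fun i => (d i : ℚ)) * (1 - A) with hM
  have hmap : (Int.castRingHom ℚ).mapMatrix B = M := by
    ext i j
    have hc := Classical.choose_spec (hden i j)
    simp only [hB, hM, RingHom.mapMatrix_apply, Matrix.map_apply, Int.coe_castRingHom,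
      Matrix.of_apply, Matrix.diagonal_mul, Matrix.sub_apply, Matrix.one_apply]
    push_cast
    rw [← hc]
    ring
  have hdet : ((B.det : ℤ) : ℚ) = M.det := by
    rw [← hmap, ← RingHom.map_det]
    rfl
  have hMdet : M.det ≠ 0 := by
    rw [hM, Matrix.det_mul, Matrix.det_diagonal]
    refine mul_ne_zero (Finset.prod_ne_zero_iff.mpr fun i _ => hdQ i) ?_
    exact ((Matrix.isUnit_iff_isUnit_det _).mp hinv).ne_zero
  refine ⟨B.det, fun i => ∑ j, Classical.choose (hr j) * B.adjugate j i, ?_, ?_, ?_⟩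
  · intro h
    apply hMdet
    rw [← hdet, h, Int.cast_zero]
  · have hbound : |M.det| ≤ ∏ i, (2 * d i : ℚ) := by
      refine (abs_det_le_prod_rowsum M).trans (Finset.prod_le_prod ?_ ?_)
      · intro i _; exact Finset.sum_nonneg fun j _ => abs_nonneg _
      · intro i _
        have hsum : ∑ j, |M i j| = (d i : ℚ) * ∑ j, |(1 - A) i j| := by
          rw [Finset.mul_sum]
          refine Finset.sum_congr rfl fun j _ => ?_
          rw [hM, Matrix.diagonal_mul, abs_mul, abs_of_nonneg (by positivity)]
        rw [hsum]
        have h2 : ∑ j, |(1 - A) i j| ≤ 2 := by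
          have htri : ∀ j, |(1 - A) i j| ≤ (if i = j then (1:ℚ) else 0) + |A i j| := by
            intro j
            rw [Matrix.sub_apply, Matrix.one_apply]
            split
            · exact (abs_sub (1:ℚ) (A i j)).trans (by simp)
            · simp [abs_neg]
          refine (Finset.sum_le_sum fun j _ => htri j).trans ?_
          rw [Finset.sum_add_distrib]
          simp only [Finset.sum_ite_eq, Finset.mem_univ, if_true]
          linarith [hrow i]
        calc (d i : ℚ) * ∑ j, |(1 - A) i j| ≤ (d i : ℚ) * 2 :=
              mul_le_mul_of_nonneg_left h2 (by positivity)
          _ = 2 * d i := by ring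
    calc ((|B.det| : ℤ) : ℚ) = |((B.det : ℤ) : ℚ)| := Int.cast_abs
      _ = |M.det| := by rw [hdet]
      _ ≤ _ := hbound
  · intro i
    set w : Fin n → ℚ := fun i => v i / d i with hw
    have hwM : Matrix.vecMul w M = r := by
      rw [hM, ← Matrix.vecMul_vecMul]
      have hwD : Matrix.vecMul w (Matrix.diagonal (fun i => (d i : ℚ))) = v := by
        funext j
        rw [Matrix.vecMul_diagonal]
        exact div_mul_cancel₀ _ (hdQ j)
      rw [hwD, hv]
    have hkey : M.det • w = Matrix.vecMul r M.adjugate := by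
      rw [← hwM, Matrix.vecMul_vecMul, Matrix.mul_adjugate]
      funext j
      simp [Matrix.vecMul, dotProduct, Matrix.smul_apply, Matrix.one_apply, mul_ite,
        Finset.mul_sum, Finset.sum_ite_eq, smul_eq_mul, mul_comm]
    have hadj : M.adjugate = (Int.castRingHom ℚ).mapMatrix B.adjugate := by
      rw [← hmap]
      exact ((Int.castRingHom ℚ).map_adjugate B).symm
    have h1 : M.det * w i = ∑ j, r j * (B.adjugate j i : ℚ) := by
      have hki := congrFun hkey i
      simp only [Pi.smul_apply, smul_eq_mul] at hki
      rw [hki, hadj]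
      simp [Matrix.vecMul, dotProduct, RingHom.mapMatrix_apply, Matrix.map_apply]
    have h2 : (∑ j, r j * (B.adjugate j i : ℚ))
        = ((∑ j, Classical.choose (hr j) * B.adjugate j i : ℤ) : ℚ) := by
      push_cast
      exact Finset.sum_congr rfl fun j _ =>
        congrArg (· * (B.adjugate j i : ℚ)) (Classical.choose_spec (hr j))
    have h3 : ((B.det : ℤ) : ℚ) * (v i / d i)
        = ((∑ j, Classical.choose (hr j) * B.adjugate j i : ℤ) : ℚ) := by
      rw [hdet]; exact h1.trans h2
    have h4 := congrArg (· * (d i : ℚ)) h3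
    rw [mul_assoc, div_mul_cancel₀ _ (hdQ i)] at h4
    show ((B.det : ℤ) : ℚ) * v i
        = (d i : ℚ) * ((∑ j, Classical.choose (hr j) * B.adjugate j i : ℤ) : ℚ)
    rw [h4]
    ring


/-- Minimal value gap between two "policies": if `A` and `A'` are rational matrices
whose row denominators are cleared by `d i ≥ 1`, whose rows have ℓ¹-norm at most 1,
with `I - A` and `I - A'` invertible, and `v`, `v'` solve `v ⬝ (I - A) = r`,
`v' ⬝ (I - A') = r` for an integer vector `r`, then the ℓ¹-distance between `v`
and `v'` is either `0` or at least `∏ i, (2 * d i)⁻²`. -/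
theorem value_gap_lower_bound (n : ℕ) (hn : 0 < n)
    (d : Fin n → ℕ) (hd : ∀ i, 1 ≤ d i)
    (A A' : Matrix (Fin n) (Fin n) ℚ)
    (hdenA : ∀ i j, ∃ z : ℤ, (d i : ℚ) * A i j = z)
    (hdenA' : ∀ i j, ∃ z : ℤ, (d i : ℚ) * A' i j = z)
    (hrowA : ∀ i : Fin n, ∑ j : Fin n, |A i j| ≤ 1)
    (hrowA' : ∀ i : Fin n, ∑ j : Fin n, |A' i j| ≤ 1)
    (hinvA : IsUnit ((1 : Matrix (Fin n) (Fin n) ℚ) - A))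
    (hinvA' : IsUnit ((1 : Matrix (Fin n) (Fin n) ℚ) - A'))
    (r : Fin n → ℚ) (hr : ∀ i, ∃ z : ℤ, r i = z)
    (v v' : Fin n → ℚ)
    (hv : Matrix.vecMul v ((1 : Matrix (Fin n) (Fin n) ℚ) - A) = r)
    (hv' : Matrix.vecMul v' ((1 : Matrix (Fin n) (Fin n) ℚ) - A') = r) :
    (∑ i : Fin n, |v i - v' i| = 0) ∨
      (∏ i : Fin n, ((2 * d i : ℚ)) ^ (-2 : ℤ)) ≤ ∑ i : Fin n, |v i - v' i| := by
  by_cases hzero : ∑ i : Fin n, |v i - v' i| = 0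
  · exact Or.inl hzero
  right
  have hdQ : ∀ i, (d i : ℚ) ≠ 0 := fun i =>
    Nat.cast_ne_zero.mpr (Nat.one_le_iff_ne_zero.mp (hd i))
  obtain ⟨Δ, z, hΔ0, hΔle, hΔ⟩ := solve_int d hd A hdenA hrowA hinvA r hr v hv
  obtain ⟨Δ', z', hΔ'0, hΔ'le, hΔ'⟩ := solve_int d hd A' hdenA' hrowA' hinvA' r hr v' hv'
  -- find an index where v i ≠ v' i
  obtain ⟨i, hi⟩ : ∃ i, v i ≠ v' i := by
    by_contra h
    push_neg at h
    exact hzero (Finset.sum_eq_zero fun i _ => by rw [h i, sub_self, abs_zero])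
  set k : ℤ := z i * Δ' - z' i * Δ with hk
  have hkey : ((Δ * Δ' : ℤ) : ℚ) * (v i - v' i) = (d i : ℚ) * (k : ℤ) := by
    rw [hk]
    push_cast
    linear_combination (Δ' : ℚ) * hΔ i - (Δ : ℚ) * hΔ' i
  have hΔΔ' : ((Δ * Δ' : ℤ) : ℚ) ≠ 0 := by
    exact_mod_cast mul_ne_zero hΔ0 hΔ'0
  have hk0 : k ≠ 0 := by
    intro h
    apply hi
    have : ((Δ * Δ' : ℤ) : ℚ) * (v i - v' i) = 0 := by rw [hkey, h]; simp
    have := (mul_eq_zero.mp this).resolve_left hΔΔ'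
    linarith [sub_eq_zero.mp this]
  have hk1 : (1 : ℚ) ≤ |((k : ℤ) : ℚ)| := by
    rw [← Int.cast_abs]
    exact_mod_cast Int.one_le_abs hk0
  -- |v i - v' i| ≥ 1 / |Δ Δ'|
  have habs : |((Δ * Δ' : ℤ) : ℚ)| * |v i - v' i| = (d i : ℚ) * |((k : ℤ) : ℚ)| := by
    rw [← abs_mul, hkey, abs_mul, abs_of_nonneg (by positivity : (0:ℚ) ≤ (d i : ℚ))]
  have hd1 : (1 : ℚ) ≤ (d i : ℚ) := by exact_mod_cast hd i
  have hge : 1 ≤ |((Δ * Δ' : ℤ) : ℚ)| * |v i - v' i| := by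
    rw [habs]
    nlinarith
  have hP : (0:ℚ) < ∏ j, (2 * d j : ℚ) :=
    Finset.prod_pos fun j _ => mul_pos two_pos (by exact_mod_cast Nat.pos_of_ne_zero (Nat.one_le_iff_ne_zero.mp (hd j)))
  have hprod : |((Δ * Δ' : ℤ) : ℚ)| ≤ (∏ j, (2 * d j : ℚ)) ^ 2 := by
    push_cast [abs_mul]
    rw [sq]
    have h1 : (0:ℚ) ≤ |(Δ : ℚ)| := abs_nonneg _
    have h2 : (0:ℚ) ≤ |(Δ' : ℚ)| := abs_nonneg _
    have ha : |((Δ : ℤ) : ℚ)| ≤ ∏ j, (2 * d j : ℚ) := by rw [← Int.cast_abs]; exact hΔle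
    have hb : |((Δ' : ℤ) : ℚ)| ≤ ∏ j, (2 * d j : ℚ) := by rw [← Int.cast_abs]; exact hΔ'le
    exact mul_le_mul ha hb h2 hP.le
  have hABS0 : (0:ℚ) < |((Δ * Δ' : ℤ) : ℚ)| := abs_pos.mpr hΔΔ'
  have hvi : (∏ j, (2 * d j : ℚ))⁻¹ ^ 2 ≤ |v i - v' i| := by
    have h1 : ((∏ j, (2 * d j : ℚ)) ^ 2)⁻¹ ≤ |((Δ * Δ' : ℤ) : ℚ)|⁻¹ :=
      inv_anti₀ hABS0 hprod
    have h2 : |((Δ * Δ' : ℤ) : ℚ)|⁻¹ ≤ |v i - v' i| := by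
      rw [inv_le_iff_one_le_mul₀' hABS0] at *
      · linarith [hge]
    calc (∏ j, (2 * d j : ℚ))⁻¹ ^ 2 = ((∏ j, (2 * d j : ℚ)) ^ 2)⁻¹ := by
          rw [inv_pow]
      _ ≤ |((Δ * Δ' : ℤ) : ℚ)|⁻¹ := h1
      _ ≤ |v i - v' i| := h2
  have hterm : ∀ j : Fin n, ((2 * d j : ℚ)) ^ (-2 : ℤ) = ((2 * d j : ℚ))⁻¹ ^ 2 := by
    intro j
    rw [_root_.zpow_neg, inv_pow]
    norm_cast
  have hrw : ∏ j : Fin n, ((2 * d j : ℚ)) ^ (-2 : ℤ) = (∏ j, (2 * d j : ℚ))⁻¹ ^ 2 :=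
    calc ∏ j : Fin n, ((2 * d j : ℚ)) ^ (-2 : ℤ)
        = ∏ j : Fin n, ((2 * d j : ℚ))⁻¹ ^ 2 := Finset.prod_congr rfl fun j _ => hterm j
      _ = (∏ j : Fin n, ((2 * d j : ℚ))⁻¹) ^ 2 := Finset.prod_pow _ 2 _
      _ = (∏ j, (2 * d j : ℚ))⁻¹ ^ 2 := by rw [Finset.prod_inv_distrib]
  rw [hrw]
  exact hvi.trans (Finset.single_le_sum (f := fun j => |v j - v' j|)
    (fun j _ => abs_nonneg _) (Finset.mem_univ i))
end
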